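/- arXiv:1405.0799 — 2 statements merged into one kernel-verified Lean document; each statement's English description precedes it below -/
import Mathlib

section
/- Let n ≥ 2. Then n ≡ 0 or 1 (mod 4) if and only if for every permutation (a_1,...,a_n) of {1,...,n} whose n-1 consecutive absolute differences |a_2-a_1|,...,|a_n-a_{n-1}| are pairwise distinct, a_1 ≡ a_n (mod 2). -/
/-
Writing dᵢ = a (i+1) - a i, the telescoping sum ∑ dᵢ equals a n - a 1, and it has the same parity
as ∑ |dᵢ|. When the |dᵢ| are distinct they are exactly 1, …, n-1, so a n - a 1 ≡ n(n-1)/2 (mod 2)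
for every such permutation, and n(n-1)/2 is even exactly when n ≡ 0, 1 (mod 4). For the converse it
therefore suffices that some such permutation exists, and 1, n, 2, n-1, 3, … is one.
-/

/-- `a` (restricted to indices `1,…,n`) is a permutation of `{1,…,n}`. -/
def IsPermOn (n : ℕ) (a : ℕ → ℤ) : Prop :=
  Set.InjOn a (Set.Icc 1 n) ∧ ∀ i ∈ Set.Icc 1 n, a i ∈ Set.Icc (1 : ℤ) (n : ℤ)

/-- The `n-1` consecutive absolute differences of `a` are pairwise distinct. -/
def DistinctDiffs (n : ℕ) (a : ℕ → ℤ) : Prop :=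
  ∀ i ∈ Set.Icc 1 (n - 1), ∀ j ∈ Set.Icc 1 (n - 1),
    |a (i + 1) - a i| = |a (j + 1) - a j| → i = j

theorem Nat.even_choose_two_iff (n : ℕ) : Even (n.choose 2) ↔ n % 4 = 0 ∨ n % 4 = 1 := by
  have hmod : n * (n - 1) % 4 = n % 4 * ((n - 1) % 4) % 4 := Nat.mul_mod _ _ _
  rw [Nat.choose_two_right, Nat.even_iff]
  have h4 : n % 4 < 4 := Nat.mod_lt _ (by norm_num)
  interval_cases hr : n % 4 <;> omega

section Differences

variable {n : ℕ} {a : ℕ → ℤ}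

theorem IsPermOn.natAbs_sub_mem (ha : IsPermOn n a) {i : ℕ} (hi : i ∈ Finset.Ico 1 n) :
    (a (i + 1) - a i).natAbs ∈ Finset.Ico 1 n := by
  obtain ⟨hinj, hmem⟩ := ha
  simp only [Finset.mem_Ico] at hi ⊢
  have hi₁ := hmem i ⟨hi.1, hi.2.le⟩
  have hi₂ := hmem (i + 1) ⟨by omega, hi.2⟩
  have hne : a (i + 1) ≠ a i := fun h => by
    have := hinj (Set.mem_Icc.mpr ⟨by omega, hi.2⟩) (Set.mem_Icc.mpr ⟨hi.1, hi.2.le⟩) h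
    omega
  simp only [Set.mem_Icc] at hi₁ hi₂
  omega

theorem DistinctDiffs.injOn_natAbs_sub (hd : DistinctDiffs n a) :
    Set.InjOn (fun i => (a (i + 1) - a i).natAbs) (Finset.Ico 1 n) := by
  intro i hi j hj hij
  simp only [Finset.coe_Ico, Set.mem_Ico] at hi hj
  refine hd i ⟨hi.1, by omega⟩ j ⟨hj.1, by omega⟩ ?_
  simpa only [Int.abs_eq_natAbs, Nat.cast_inj] using hij

theorem sum_natAbs_sub_eq_choose_two (ha : IsPermOn n a) (hd : DistinctDiffs n a) :
    ∑ i ∈ Finset.Ico 1 n, (a (i + 1) - a i).natAbs = n.choose 2 := by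
  have hmaps : Set.MapsTo (fun i => (a (i + 1) - a i).natAbs) (Finset.Ico 1 n) (Finset.Ico 1 n) :=
    fun i hi => ha.natAbs_sub_mem hi
  have hsurj := Finset.surjOn_of_injOn_of_card_le _ hmaps hd.injOn_natAbs_sub le_rfl
  rw [Finset.sum_nbij _ hmaps hd.injOn_natAbs_sub hsurj (g := fun k => k) (fun _ _ => rfl),
    Nat.choose_two_right, ← Finset.sum_range_id]
  rcases Nat.eq_zero_or_pos n with rfl | hn
  · rfl
  · rw [Finset.sum_range_eq_add_Ico _ hn, zero_add]

theorem sub_modEq_choose_two (hn : 1 ≤ n) (ha : IsPermOn n a) (hd : DistinctDiffs n a) :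
    a n - a 1 ≡ (n.choose 2 : ℤ) [ZMOD 2] :=
  calc a n - a 1 = ∑ i ∈ Finset.Ico 1 n, (a (i + 1) - a i) := (Finset.sum_Ico_sub a hn).symm
    _ ≡ ∑ i ∈ Finset.Ico 1 n, |a (i + 1) - a i| [ZMOD 2] :=
      Int.ModEq.sum fun _ _ => Int.abs_modEq_two.symm
    _ = (n.choose 2 : ℤ) := by
      simp only [Int.abs_eq_natAbs, ← Nat.cast_sum, sum_natAbs_sub_eq_choose_two ha hd]

theorem modEq_iff_even_choose_two (hn : 1 ≤ n) (ha : IsPermOn n a) (hd : DistinctDiffs n a) :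
    a 1 ≡ a n [ZMOD 2] ↔ Even (n.choose 2) := by
  have h := sub_modEq_choose_two hn ha hd
  rw [Nat.even_iff]
  unfold Int.ModEq at h ⊢
  omega

end Differences

/-- The sequence `1, n, 2, n - 1, 3, …`, whose consecutive differences are `n - 1, n - 2, …, 1`. -/
def zigzag (n i : ℕ) : ℤ :=
  if i % 2 = 0 then (n : ℤ) + 1 - (i / 2 : ℕ) else ((i + 1) / 2 : ℕ)

theorem isPermOn_zigzag (n : ℕ) : IsPermOn n (zigzag n) := by
  refine ⟨fun i hi j hj hij => ?_, fun i hi => ?_⟩ <;>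
    simp only [Set.mem_Icc, zigzag] at * <;> split_ifs at * <;> omega

theorem abs_zigzag_succ_sub {n i : ℕ} (hi : i ≤ n) :
    |zigzag n (i + 1) - zigzag n i| = n - i := by
  rw [abs_eq (by omega)]
  unfold zigzag
  split_ifs <;> omega

theorem distinctDiffs_zigzag (n : ℕ) : DistinctDiffs n (zigzag n) := by
  intro i hi j hj hij
  rw [abs_zigzag_succ_sub (hi.2.trans (Nat.sub_le n 1)),
    abs_zigzag_succ_sub (hj.2.trans (Nat.sub_le n 1))] at hij
  omega

theorem stmt_7 (n : ℕ) (hn : 2 ≤ n) :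
    (n % 4 = 0 ∨ n % 4 = 1) ↔
      ∀ a : ℕ → ℤ, IsPermOn n a → DistinctDiffs n a → Int.ModEq 2 (a 1) (a n) := by
  have hn₁ : 1 ≤ n := by omega
  rw [← Nat.even_choose_two_iff]
  constructor
  · exact fun h a ha hd => (modEq_iff_even_choose_two hn₁ ha hd).2 h
  · intro h
    have hz := h (zigzag n) (isPermOn_zigzag n) (distinctDiffs_zigzag n)
    exact (modEq_iff_even_choose_two hn₁ (isPermOn_zigzag n) (distinctDiffs_zigzag n)).1 hz
end

section
/- Let A be a set of n distinct reals, n ≥ 4, and let a be a uniformly random cyclic arrangement of A. Then the expected number of distinct values among the n cyclic absolute differences satisfies E(|d(a)|) ≥ n − (1/2)·n²/((n-1)(n-2)) − (E(A,A) − 2n² + n)/(n(n-3)), where E(A,A) is the additive energy of A. -/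
/-!
Let `D(σ)` be the number of distinct cyclic differences of an arrangement `σ` and `C(σ)` the number
of ordered pairs of distinct positions with equal differences. A value taken `k` times contributes
`1` to `D` and `k(k-1)` to `C`, and `2k ≤ 2 + k(k-1)`, so `n ≤ D(σ) + C(σ)/2`; it remains to average
`C` over the `n!` arrangements, one pair of positions at a time. Prescribing the values at `m`
positions leaves at most `(n-m)!` arrangements.

For adjacent positions the three consecutive values `x, y, z` satisfy `x + z = 2y`, `x ≠ z`. Given
`y`, the smaller of `x, z` lies below `y` and its reflection in `y` above it, so there are at most
`2 min(#{a < y}, #{a > y})` such triples, at most `n²/2` in total. For the other pairs the four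
values `a, b, c, d` at `i, i+1, j, j+1` satisfy `a + d = b + c` or `a + c = b + d` with
`a ∉ {b, c, d}`: a solution of `a + b = c + d` other than the `2n² - n` trivial ones.
-/

/-- The additive energy of a finite set of reals: the number of quadruples
`(a, b, c, d)` with `a + b = c + d`. -/
noncomputable def addEnergy (A : Finset ℝ) : ℕ :=
  (((A ×ˢ A) ×ˢ (A ×ˢ A)).filter
    (fun p => p.1.1 + p.1.2 = p.2.1 + p.2.2)).card

open Finset hiding addEnergy
open scoped Nat

theorem two_mul_card_le_two_mul_card_image_add_sum_card {α β : Type*} [Fintype α]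
    [DecidableEq α] [DecidableEq β] (f : α → β) :
    2 * Fintype.card α ≤ 2 * #(univ.image f) + ∑ a, #{b ∈ univ.erase a | f a = f b} := by
  have hmaps : ∀ a ∈ (univ : Finset α), f a ∈ univ.image f := fun a _ =>
    mem_image_of_mem f (mem_univ a)
  have hothers (y) (a) (ha : a ∈ ({b | f b = y} : Finset α)) :
      #{b ∈ univ.erase a | f a = f b} = #({b | f b = y} : Finset α) - 1 := by
    rw [← card_erase_of_mem ha, filter_erase]
    congr 1
    ext b
    simp_all [eq_comm]
  rw [← card_univ, card_eq_sum_card_fiberwise hmaps, ← sum_fiberwise_of_maps_to hmaps, mul_sum,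
    card_eq_sum_ones (univ.image f), mul_sum, ← sum_add_distrib]
  refine sum_le_sum fun y _ => ?_
  rw [sum_congr rfl (hothers y), sum_const, smul_eq_mul]
  generalize #({b | f b = y} : Finset α) = k
  rcases k with _ | k
  · simp
  · rw [Nat.add_sub_cancel]
    nlinarith [Nat.le_mul_self k]

section PrescribedValues

variable {α β : Type*} [Fintype α] [DecidableEq α] [Fintype β] [DecidableEq β]

theorem card_filter_equiv_eqOn_le (S : Finset α) (σ₀ : α ≃ β) :
    #{σ : α ≃ β | ∀ x ∈ S, σ x = σ₀ x} ≤ (Fintype.card α - #S)! := by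
  set T := S.map σ₀.toEmbedding
  have hmapsTo (σ : {σ : α ≃ β // ∀ x ∈ S, σ x = σ₀ x}) (x : ↥Sᶜ) : σ.1 x ∈ Tᶜ := by
    rw [mem_compl, mem_map_equiv]
    intro h
    have hσ := σ.2 _ h
    rw [Equiv.apply_symm_apply] at hσ
    exact mem_compl.1 x.2 (σ.1.injective hσ ▸ h)
  let restrict (σ : {σ : α ≃ β // ∀ x ∈ S, σ x = σ₀ x}) : ↥Sᶜ ↪ ↥Tᶜ :=
    ⟨fun x => ⟨σ.1 x, hmapsTo σ x⟩,
      fun x y h => Subtype.ext (σ.1.injective (congrArg Subtype.val h))⟩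
  have hrestrict : Function.Injective restrict := by
    intro σ τ h
    ext x : 2
    by_cases hx : x ∈ S
    · rw [σ.2 x hx, τ.2 x hx]
    · exact congrArg Subtype.val (DFunLike.congr_fun h ⟨x, mem_compl.2 hx⟩)
  rw [← Fintype.card_subtype]
  calc _ ≤ _ := Fintype.card_le_of_injective restrict hrestrict
    _ = _ := by
      rw [Fintype.card_embedding_eq, Fintype.card_coe, Fintype.card_coe, card_compl, card_compl,
        card_map, Fintype.card_congr σ₀, Nat.descFactorial_self]

theorem card_le_factorial_mul_card_of_eqOn {γ : Type*} [DecidableEq γ] {S : Finset α}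
    {s : Finset (α ≃ β)} {t : Finset γ} (Φ : (α ≃ β) → γ)
    (hΦ : ∀ σ τ, Φ σ = Φ τ → ∀ x ∈ S, σ x = τ x) (hst : ∀ σ ∈ s, Φ σ ∈ t) :
    #s ≤ (Fintype.card α - #S)! * #t := by
  refine card_le_mul_card_image_of_maps_to hst _ fun c _ => ?_
  obtain hempty | ⟨σ₀, hσ₀⟩ := (s.filter (Φ · = c)).eq_empty_or_nonempty
  · simp [hempty]
  refine (card_le_card fun σ hσ => ?_).trans (card_filter_equiv_eqOn_le S σ₀)
  rw [mem_filter] at hσ hσ₀ ⊢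
  exact ⟨mem_univ _, hΦ σ σ₀ (hσ.2.trans hσ₀.2.symm)⟩

end PrescribedValues

noncomputable def midpointTriples (A : Finset ℝ) : Finset (ℝ × ℝ × ℝ) :=
  (A ×ˢ A ×ˢ A).filter fun t => t.1 ≠ t.2.2 ∧ t.1 + t.2.2 = 2 * t.2.1

noncomputable def nontrivialAddQuadruples (A : Finset ℝ) : Finset ((ℝ × ℝ) × ℝ × ℝ) :=
  ((A ×ˢ A) ×ˢ (A ×ˢ A)).filter fun p =>
    p.1.1 + p.1.2 = p.2.1 + p.2.2 ∧ p.1.1 ≠ p.2.1 ∧ p.1.1 ≠ p.2.2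

theorem card_midpointTriples_le (A : Finset ℝ) :
    #(midpointTriples A) ≤ 2 * #{p ∈ A ×ˢ A | p.1 < p.2 ∧ 2 * p.2 - p.1 ∈ A} := by
  rw [two_mul, ← card_filter_add_card_filter_not (p := fun t : ℝ × ℝ × ℝ => t.1 < t.2.1)]
  simp only [midpointTriples, filter_filter]
  gcongr
  · refine card_le_card_of_injOn (fun t => (t.1, t.2.1)) (fun t ht => ?_) (fun t ht u hu h => ?_)
    · simp only [mem_coe, mem_filter, mem_product] at ht ⊢
      obtain ⟨⟨hx, hy, hz⟩, ⟨-, hsum⟩, hlt⟩ := ht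
      exact ⟨⟨hx, hy⟩, hlt, by rwa [← hsum, add_sub_cancel_left]⟩
    · simp only [mem_coe, mem_filter, Prod.mk.injEq] at ht hu h
      ext <;> linarith
  · refine card_le_card_of_injOn (fun t => (t.2.2, t.2.1)) (fun t ht => ?_) (fun t ht u hu h => ?_)
    · simp only [mem_coe, mem_filter, mem_product, not_lt] at ht ⊢
      obtain ⟨⟨hx, hy, hz⟩, ⟨hne, hsum⟩, hle⟩ := ht
      refine ⟨⟨hz, hy⟩, ?_, by rwa [← hsum, add_sub_cancel_right]⟩
      by_contra! h
      exact hne (by linarith)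
    · simp only [mem_coe, mem_filter, Prod.mk.injEq] at ht hu h
      ext <;> linarith

theorem card_filter_lt_le_sum_min (A : Finset ℝ) :
    #{p ∈ A ×ˢ A | p.1 < p.2 ∧ 2 * p.2 - p.1 ∈ A} ≤
      ∑ y ∈ A, min #{a ∈ A | a < y} #{a ∈ A | y < a} := by
  rw [card_eq_sum_card_fiberwise (f := Prod.snd) (t := A)
    fun p hp => (mem_product.1 (mem_filter.1 hp).1).2]
  gcongr with y hy
  simp only [filter_filter]
  refine le_min (card_le_card_of_injOn Prod.fst (fun p hp => ?_) fun p hp q hq h => ?_)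
    (card_le_card_of_injOn (fun p => 2 * p.2 - p.1) (fun p hp => ?_) fun p hp q hq h => ?_)
  · simp only [mem_coe, mem_filter, mem_product] at hp ⊢
    exact ⟨hp.1.1, hp.2.2 ▸ hp.2.1.1⟩
  · simp only [mem_coe, mem_filter] at hp hq
    exact Prod.ext h (hp.2.2.trans hq.2.2.symm)
  · simp only [mem_coe, mem_filter, mem_product] at hp ⊢
    obtain ⟨-, ⟨hlt, hmem⟩, rfl⟩ := hp
    exact ⟨hmem, by linarith⟩
  · simp only [mem_coe, mem_filter] at hp hq h
    exact Prod.ext (by linarith) (hp.2.2.trans hq.2.2.symm)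

theorem sum_min_card_filter_lt_card_filter_gt {α : Type*} [LinearOrder α] {A : Finset α}
    {n : ℕ} (hA : #A = n) :
    ∑ y ∈ A, min #{a ∈ A | a < y} #{a ∈ A | y < a} = ∑ k ∈ range n, min k (n - 1 - k) := by
  set e := A.orderEmbOfFin hA
  have hA' : A = univ.map e.toEmbedding := (map_orderEmbOfFin_univ A hA).symm
  have hlt (k : Fin n) : #{a ∈ A | a < e k} = k := by
    rw [hA', filter_map, card_map]
    simp [filter_gt_eq_Iio]
  have hgt (k : Fin n) : #{a ∈ A | e k < a} = n - 1 - k := by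
    rw [hA', filter_map, card_map]
    simp [filter_lt_eq_Ioi]
  nth_rewrite 1 [hA']
  rw [sum_map, ← Fin.sum_univ_eq_sum_range]
  simp [hlt, hgt]

theorem four_mul_sum_range_min_le : ∀ n : ℕ, 4 * ∑ k ∈ range n, min k (n - 1 - k) ≤ n ^ 2
  | 0 => by simp
  | 1 => by simp
  | n + 2 => by
    have hstep : ∑ k ∈ range (n + 2), min k (n + 2 - 1 - k) =
        ∑ k ∈ range n, min k (n - 1 - k) + n := by
      have hshift (k) (hk : k ∈ range n) :
          min (k + 1) (n + 2 - 1 - (k + 1)) = min k (n - 1 - k) + 1 := by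
        rw [mem_range] at hk
        omega
      rw [sum_range_succ', sum_range_succ, sum_congr rfl hshift, sum_add_distrib]
      simp
    have := four_mul_sum_range_min_le n
    rw [hstep]
    nlinarith

theorem two_mul_card_midpointTriples_le {A : Finset ℝ} {n : ℕ} (hA : #A = n) :
    2 * #(midpointTriples A) ≤ n ^ 2 :=
  calc 2 * #(midpointTriples A)
      ≤ 4 * ∑ y ∈ A, min #{a ∈ A | a < y} #{a ∈ A | y < a} := by
        linarith [card_midpointTriples_le A, card_filter_lt_le_sum_min A]
    _ = 4 * ∑ k ∈ range n, min k (n - 1 - k) := by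
        rw [sum_min_card_filter_lt_card_filter_gt hA]
    _ ≤ n ^ 2 := four_mul_sum_range_min_le n

theorem card_nontrivialAddQuadruples_add_le {A : Finset ℝ} {n : ℕ} (hA : #A = n) :
    #(nontrivialAddQuadruples A) + 2 * n ^ 2 ≤ addEnergy A + n := by
  set diag := (A ×ˢ A).image fun p => (p, p)
  set swaps := A.offDiag.image fun p => (p, p.swap)
  have hdisj₁ : Disjoint diag swaps := by
    simp only [diag, swaps, disjoint_left, mem_image, mem_offDiag]
    rintro _ ⟨p, -, rfl⟩ ⟨q, ⟨-, -, hq⟩, h⟩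
    simp only [Prod.mk.injEq] at h
    exact hq (congrArg Prod.fst (h.1.trans h.2.symm))
  have hdisj₂ : Disjoint (nontrivialAddQuadruples A) (diag ∪ swaps) := by
    simp only [diag, swaps, nontrivialAddQuadruples, disjoint_left, mem_union, mem_image,
      mem_filter]
    rintro _ ⟨-, -, h₁, h₂⟩ (⟨p, -, rfl⟩ | ⟨p, -, rfl⟩)
    · exact h₁ rfl
    · exact h₂ rfl
  have hsub : nontrivialAddQuadruples A ∪ (diag ∪ swaps) ⊆
      ((A ×ˢ A) ×ˢ (A ×ˢ A)).filter (fun p => p.1.1 + p.1.2 = p.2.1 + p.2.2) := by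
    refine union_subset (fun q hq => ?_) (union_subset (fun q hq => ?_) fun q hq => ?_)
    · simp only [nontrivialAddQuadruples, mem_filter] at hq ⊢
      exact ⟨hq.1, hq.2.1⟩
    · obtain ⟨p, hp, rfl⟩ := mem_image.1 hq
      exact mem_filter.2 ⟨mem_product.2 ⟨hp, hp⟩, rfl⟩
    · obtain ⟨p, hp, rfl⟩ := mem_image.1 hq
      obtain ⟨ha, hb, -⟩ := mem_offDiag.1 hp
      exact mem_filter.2 ⟨mem_product.2 ⟨mem_product.2 ⟨ha, hb⟩, mem_product.2 ⟨hb, ha⟩⟩,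
        add_comm _ _⟩
  have := card_le_card hsub
  rw [card_union_of_disjoint hdisj₂, card_union_of_disjoint hdisj₁,
    card_image_of_injective _ fun p q h => congrArg Prod.fst h,
    card_image_of_injective _ fun p q h => congrArg Prod.fst h, card_product, offDiag_card,
    hA] at this
  have : n ≤ n * n := Nat.le_mul_self n
  rw [addEnergy, sq]
  omega

section EquivToFinset

variable {α : Type*} [Fintype α] [DecidableEq α] {A : Finset ℝ}

theorem card_filter_add_eq_two_mul_le {p₁ p₂ p₃ : α} (h₁₂ : p₁ ≠ p₂) (h₁₃ : p₁ ≠ p₃)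
    (h₂₃ : p₂ ≠ p₃) :
    #{σ : α ≃ A | (σ p₁ : ℝ) + σ p₃ = 2 * σ p₂} ≤
      (Fintype.card α - 3)! * #(midpointTriples A) := by
  have hS : #{p₁, p₂, p₃} = 3 := card_eq_three.2 ⟨_, _, _, h₁₂, h₁₃, h₂₃, rfl⟩
  rw [← hS]
  refine card_le_factorial_mul_card_of_eqOn (fun σ => ((σ p₁ : ℝ), (σ p₂ : ℝ), (σ p₃ : ℝ)))
    (fun σ τ h => ?_) (fun σ hσ => ?_)
  · simp only [Prod.mk.injEq, ← Subtype.ext_iff] at h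
    simp only [mem_insert, mem_singleton, forall_eq_or_imp, forall_eq]
    exact h
  · simp only [mem_filter, mem_univ, true_and] at hσ
    simp only [midpointTriples, mem_filter, mem_product, coe_mem, true_and, ne_eq,
      Subtype.coe_inj, EmbeddingLike.apply_eq_iff_eq]
    exact ⟨h₁₃, hσ⟩

theorem card_filter_add_eq_add_le {p₁ p₂ p₃ p₄ : α} (h₁₂ : p₁ ≠ p₂) (h₁₃ : p₁ ≠ p₃)
    (h₁₄ : p₁ ≠ p₄) (h₂₃ : p₂ ≠ p₃) (h₂₄ : p₂ ≠ p₄) (h₃₄ : p₃ ≠ p₄) :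
    #{σ : α ≃ A | (σ p₁ : ℝ) + σ p₂ = σ p₃ + σ p₄} ≤
      (Fintype.card α - 4)! * #(nontrivialAddQuadruples A) := by
  have hS : #{p₁, p₂, p₃, p₄} = 4 :=
    card_eq_four.2 ⟨_, _, _, _, h₁₂, h₁₃, h₁₄, h₂₃, h₂₄, h₃₄, rfl⟩
  rw [← hS]
  refine card_le_factorial_mul_card_of_eqOn
    (fun σ => (((σ p₁ : ℝ), (σ p₂ : ℝ)), (σ p₃ : ℝ), (σ p₄ : ℝ)))
    (fun σ τ h => ?_) (fun σ hσ => ?_)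
  · simp only [Prod.mk.injEq, ← Subtype.ext_iff] at h
    simp only [mem_insert, mem_singleton, forall_eq_or_imp, forall_eq]
    exact ⟨h.1.1, h.1.2, h.2⟩
  · simp only [mem_filter, mem_univ, true_and] at hσ
    simp only [nontrivialAddQuadruples, mem_filter, mem_product, coe_mem, true_and, ne_eq,
      Subtype.coe_inj, EmbeddingLike.apply_eq_iff_eq]
    exact ⟨hσ, h₁₃, h₁₄⟩

end EquivToFinset

section Arrangement

variable {α : Type*} [Fintype α] [DecidableEq α] {A : Finset ℝ}

def stepDiff (r : Equiv.Perm α) (σ : α ≃ A) (i : α) : ℝ := |(σ (r i) : ℝ) - σ i|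

variable {r : Equiv.Perm α}

theorem card_filter_stepDiff_eq_stepDiff_apply_le (hr₁ : ∀ i, r i ≠ i) (hr₂ : ∀ i, r (r i) ≠ i)
    (i : α) :
    #{σ : α ≃ A | stepDiff r σ i = stepDiff r σ (r i)} ≤
      (Fintype.card α - 3)! * #(midpointTriples A) := by
  refine (card_le_card (monotone_filter_right _ fun σ _ hσ => ?_)).trans <|
    card_filter_add_eq_two_mul_le (hr₁ i).symm (hr₂ i).symm fun h => hr₁ i (r.injective h).symm
  have hne : (σ i : ℝ) ≠ σ (r (r i)) := fun h => hr₂ i (σ.injective (Subtype.ext h)).symm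
  rcases abs_eq_abs.1 hσ with h | h
  · linarith
  · exact absurd (by linarith) hne

theorem card_filter_stepDiff_eq_le (hr₁ : ∀ i, r i ≠ i) {i j : α} (hij : i ≠ j) (hj : j ≠ r i)
    (hi : i ≠ r j) :
    #{σ : α ≃ A | stepDiff r σ i = stepDiff r σ j} ≤
      2 * ((Fintype.card α - 4)! * #(nontrivialAddQuadruples A)) := by
  have hrij : r i ≠ r j := fun h => hij (r.injective h)
  have h₁ := card_filter_add_eq_add_le (A := A) hi (hr₁ i).symm hij (Ne.symm hrij) (hr₁ j)
    hj.symm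
  have h₂ := card_filter_add_eq_add_le (A := A) hij (hr₁ i).symm hi hj (hr₁ j).symm hrij
  calc _ ≤ #({σ : α ≃ A | (σ i : ℝ) + σ (r j) = σ (r i) + σ j ∨
        (σ i : ℝ) + σ j = σ (r i) + σ (r j)} : Finset _) := by
        refine card_le_card (monotone_filter_right _ fun σ _ hσ => ?_)
        rcases abs_eq_abs.1 hσ with h | h
        · left; linarith
        · right; linarith
    _ ≤ _ := by
      rw [filter_or]
      exact (card_union_le _ _).trans (by omega)

theorem sum_card_filter_stepDiff_eq_le (hr₁ : ∀ i, r i ≠ i) (hr₂ : ∀ i, r (r i) ≠ i) (i : α) :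
    ∑ j ∈ univ.erase i, #{σ : α ≃ A | stepDiff r σ i = stepDiff r σ j} ≤
      2 * (Fintype.card α - 3)! * (#(midpointTriples A) + #(nontrivialAddQuadruples A)) := by
  set n := Fintype.card α
  have hne : r i ≠ r.symm i := fun h => hr₂ (r.symm i) (by rw [Equiv.apply_symm_apply, h])
  have hadj : {r i, r.symm i} ⊆ univ.erase i := by
    simp only [insert_subset_iff, singleton_subset_iff, mem_erase, mem_univ, and_true]
    exact ⟨hr₁ i, fun h => hr₁ i (by rw [← h, Equiv.apply_symm_apply, h])⟩
  have hsucc := card_filter_stepDiff_eq_stepDiff_apply_le (A := A) hr₁ hr₂ i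
  have hpred : #{σ : α ≃ A | stepDiff r σ i = stepDiff r σ (r.symm i)} ≤
      (n - 3)! * #(midpointTriples A) := by
    have := card_filter_stepDiff_eq_stepDiff_apply_le (A := A) hr₁ hr₂ (r.symm i)
    rw [Equiv.apply_symm_apply] at this
    exact (congrArg card (filter_congr fun _ _ => eq_comm)).trans_le this
  have hrest : ∑ j ∈ univ.erase i \ {r i, r.symm i},
      #{σ : α ≃ A | stepDiff r σ i = stepDiff r σ j} ≤
        (n - 3) * (2 * ((n - 4)! * #(nontrivialAddQuadruples A))) := by
    have hcard : #(univ.erase i \ {r i, r.symm i}) = n - 3 := by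
      rw [card_sdiff_of_subset hadj, card_erase_of_mem (mem_univ i), card_pair hne, card_univ]
      omega
    rw [← hcard]
    refine sum_le_card_nsmul _ _ _ fun j hj => card_filter_stepDiff_eq_le hr₁ ?_ ?_ ?_
    all_goals
      simp only [mem_sdiff, mem_erase, mem_univ, mem_insert, mem_singleton, and_true] at hj
    · exact Ne.symm hj.1
    · exact hj.2 ∘ Or.inl
    · rintro rfl
      exact hj.2 (Or.inr (r.symm_apply_apply j).symm)
  have hfact : (n - 3) * (n - 4)! ≤ (n - 3)! := by
    rcases Nat.eq_zero_or_pos (n - 3) with h | h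
    · simp [h]
    · rw [show n - 4 = n - 3 - 1 by omega, Nat.mul_factorial_pred h.ne']
  rw [← sum_sdiff hadj, sum_pair hne]
  have := Nat.mul_le_mul_right (2 * #(nontrivialAddQuadruples A)) hfact
  linarith

theorem card_mul_factorial_le_sum_card_image (hr₁ : ∀ i, r i ≠ i) (hr₂ : ∀ i, r (r i) ≠ i)
    (hA : #A = Fintype.card α) :
    Fintype.card α * (Fintype.card α)! ≤ ∑ σ : α ≃ A, #(univ.image (stepDiff r σ)) +
      Fintype.card α * (Fintype.card α - 3)! *
        (#(midpointTriples A) + #(nontrivialAddQuadruples A)) := by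
  set n := Fintype.card α
  have hequiv : Fintype.card (α ≃ A) = n ! :=
    Fintype.card_equiv (Fintype.equivOfCardEq (by simp [hA, n]))
  have hswap : ∑ σ : α ≃ A, ∑ i, #{j ∈ univ.erase i | stepDiff r σ i = stepDiff r σ j} =
      ∑ i, ∑ j ∈ univ.erase i, #{σ : α ≃ A | stepDiff r σ i = stepDiff r σ j} := by
    rw [sum_comm]
    refine sum_congr rfl fun i _ => ?_
    simp only [card_filter]
    exact sum_comm
  have hcollide := sum_le_sum fun (σ : α ≃ A) (_ : σ ∈ univ) =>
    two_mul_card_le_two_mul_card_image_add_sum_card (stepDiff r σ)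
  rw [sum_const, card_univ, hequiv, sum_add_distrib, ← mul_sum, hswap] at hcollide
  have hpairs := sum_le_sum fun i (_ : i ∈ univ) =>
    sum_card_filter_stepDiff_eq_le (A := A) hr₁ hr₂ i
  rw [sum_const, card_univ] at hpairs
  simp only [smul_eq_mul] at hcollide hpairs
  linarith

end Arrangement

theorem finRotate_apply_ne_self {n : ℕ} (hn : 2 ≤ n) (i : Fin n) : finRotate n i ≠ i := by
  obtain ⟨m, rfl⟩ : ∃ m, n = m + 2 := ⟨n - 2, by omega⟩
  rw [finRotate_apply, Ne, add_eq_left]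
  exact one_ne_zero

theorem finRotate_finRotate_apply_ne_self {n : ℕ} (hn : 3 ≤ n) (i : Fin n) :
    finRotate n (finRotate n i) ≠ i := by
  obtain ⟨m, rfl⟩ : ∃ m, n = m + 3 := ⟨n - 3, by omega⟩
  rw [finRotate_apply, finRotate_apply, Ne, add_assoc, add_eq_left, Fin.ext_iff]
  simp [Fin.val_add, Nat.mod_eq_of_lt (show 2 < m + 3 by omega)]

theorem sub_div_le_div_factorial {n S C : ℕ} (hn : 3 ≤ n) (h : n * n ! ≤ S + n * (n - 3)! * C) :
    (n : ℝ) - C / ((n - 1) * (n - 2)) ≤ S / n ! := by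
  obtain ⟨m, rfl⟩ : ∃ m, n = m + 3 := ⟨n - 3, by omega⟩
  have hfact : ((m + 3)! : ℝ) = (m + 3) * ((m + 3 - 1) * (m + 3 - 2)) * m ! := by
    push_cast [Nat.factorial_succ]
    ring
  have h₁ : (m : ℝ) + 3 - 1 ≠ 0 := by linarith [m.cast_nonneg (α := ℝ)]
  have h₂ : (m : ℝ) + 3 - 2 ≠ 0 := by linarith [m.cast_nonneg (α := ℝ)]
  rw [Nat.add_sub_cancel] at h
  replace h : ((m + 3 : ℕ) : ℝ) * (m + 3)! ≤ S + (m + 3) * m ! * C := by exact_mod_cast h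
  rw [le_div_iff₀ (by positivity)]
  calc _ = ((m + 3 : ℕ) : ℝ) * (m + 3)! - (m + 3) * m ! * C := by
        rw [hfact]
        push_cast
        field_simp
    _ ≤ S := by linarith

theorem add_div_le_half_sq_div_add_div {N T K B : ℝ} (hN : 4 ≤ N) (hT : 2 * T ≤ N ^ 2) (hK : K ≤ B)
    (hK₀ : 0 ≤ K) :
    (T + K) / ((N - 1) * (N - 2)) ≤ 1 / 2 * N ^ 2 / ((N - 1) * (N - 2)) + B / (N * (N - 3)) := by
  have hpos : 0 < N * (N - 3) := by nlinarith
  have hT' : T / ((N - 1) * (N - 2)) ≤ 1 / 2 * N ^ 2 / ((N - 1) * (N - 2)) :=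
    div_le_div_of_nonneg_right (by linarith) (by nlinarith)
  have hK' : K / ((N - 1) * (N - 2)) ≤ B / (N * (N - 3)) :=
    div_le_div₀ (hK₀.trans hK) hK hpos (by nlinarith)
  rw [add_div]
  linarith

open scoped Classical in
theorem stmt_18 (n : ℕ) (hn : 4 ≤ n) (A : Finset ℝ) (hA : A.card = n) :
    (∑ σ : Fin n ≃ {x // x ∈ A},
        ((Finset.univ.image
          (fun i : Fin n => |(σ (finRotate n i) : ℝ) - (σ i : ℝ)|)).card : ℝ))
      / (Nat.factorial n : ℝ)
    ≥ (n : ℝ) - (1 / 2) * (n : ℝ) ^ 2 / (((n : ℝ) - 1) * ((n : ℝ) - 2))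
        - ((addEnergy A : ℝ) - 2 * (n : ℝ) ^ 2 + (n : ℝ)) / ((n : ℝ) * ((n : ℝ) - 3)) := by
  have hcount := card_mul_factorial_le_sum_card_image (A := A) (r := finRotate n)
    (finRotate_apply_ne_self (by omega)) (finRotate_finRotate_apply_ne_self (by omega))
    (by rw [hA, Fintype.card_fin])
  rw [Fintype.card_fin] at hcount
  have hmean := sub_div_le_div_factorial (by omega) hcount
  have hT : 2 * (#(midpointTriples A) : ℝ) ≤ n ^ 2 := by
    exact_mod_cast two_mul_card_midpointTriples_le hA
  have hK : (#(nontrivialAddQuadruples A) : ℝ) + 2 * n ^ 2 ≤ addEnergy A + n := by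
    exact_mod_cast card_nontrivialAddQuadruples_add_le hA
  have htail := add_div_le_half_sq_div_add_div (K := #(nontrivialAddQuadruples A))
    (B := addEnergy A - 2 * n ^ 2 + n) (by exact_mod_cast hn) hT (by linarith) (Nat.cast_nonneg _)
  push_cast at hmean
  rw [ge_iff_le]
  calc _ ≤ (n : ℝ) - (#(midpointTriples A) + #(nontrivialAddQuadruples A)) /
        ((n - 1) * (n - 2)) := by linarith
    _ ≤ _ := hmean
end
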